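/- arXiv:1508.05863 — 2 statements merged into one kernel-verified Lean document; each statement's English description precedes it below -/
import Mathlib

section
/- Let L_n : C[0,ν] → C[0,ν] be positive linear operators with L_n(1) = 1, and suppose the sequences ‖L_n(t;·) − x‖ and ‖L_n(t²;·) − x²‖ (sup norms on [0,ν]) are statistically convergent to 0. Then for every f ∈ C[0,ν], ‖L_n(f;·) − f‖ is statistically convergent to 0. -/
open Classical in
/-- `S ⊆ ℕ` has natural density zero. -/
noncomputable def densityZero (S : Set ℕ) : Prop :=
  Filter.Tendsto (fun n => (((Finset.range n).filter (fun j => j ∈ S)).card : ℝ) / n)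
    Filter.atTop (nhds 0)

/-- Statistical convergence of a real sequence to `L`. -/
noncomputable def statTendsto (x : ℕ → ℝ) (L : ℝ) : Prop :=
  ∀ ε > (0 : ℝ), densityZero {n | ε ≤ |x n - L|}

/-!
Write `e₁ t = t` and `e₂ t = t²`. Given `f` and `ε > 0`, uniform continuity gives `c` with
`|f t - f x| ≤ ε + c (t - x)²`. As `L` is positive and `L 1 = 1`, `|L f x - f x| = |L (f - f x) x|`
is at most the value at `x` of `L` applied to `ε + c (t - x)² = (ε + c x²) - 2 c x e₁ + c e₂`,
that is `ε + c ((L e₂ x - x²) - 2 x (L e₁ x - x))`. Hence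
`‖L f - f‖ ≤ ε + c (‖L e₂ - e₂‖ + 2 ‖e₁‖ ‖L e₁ - e₁‖)` with `c` independent of the operator,
and statistical convergence passes through such a bound.
-/

section Statistical

variable {S T : Set ℕ} {a b : ℕ → ℝ} {A B : ℝ}

theorem densityZero.mono (hT : densityZero T) (h : S ⊆ T) : densityZero S := by
  unfold densityZero at *
  refine squeeze_zero (fun n => by positivity) (fun n => ?_) hT
  gcongr

theorem densityZero.union (hS : densityZero S) (hT : densityZero T) : densityZero (S ∪ T) := by
  unfold densityZero at *
  refine squeeze_zero (fun n => by positivity) (fun n => ?_) (by simpa using hS.add hT)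
  rw [← add_div]
  gcongr
  refine mod_cast (Finset.card_le_card fun j hj => ?_).trans (Finset.card_union_le _ _)
  simpa [and_or_left] using hj

theorem statTendsto.add (ha : statTendsto a A) (hb : statTendsto b B) :
    statTendsto (fun n => a n + b n) (A + B) := fun ε hε =>
  ((ha (ε / 2) (by positivity)).union (hb (ε / 2) (by positivity))).mono fun n hn => by
    by_contra h
    simp only [Set.mem_union, Set.mem_ofPred_eq, not_or, not_le] at h hn
    have := abs_add_le (a n - A) (b n - B)
    rw [add_sub_add_comm] at hn
    linarith

theorem statTendsto.const_mul (ha : statTendsto a A) (c : ℝ) :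
    statTendsto (fun n => c * a n) (c * A) := fun ε hε =>
  (ha (ε / (|c| + 1)) (by positivity)).mono fun n hn => by
    by_contra h
    simp only [Set.mem_ofPred_eq, not_le, ← mul_sub, abs_mul] at h hn
    rw [lt_div_iff₀ (by positivity)] at h
    nlinarith [abs_nonneg (a n - A)]

theorem statTendsto_zero_of_le_add_mul (h : ∀ ε > 0, ∃ C, ∀ n, |b n| ≤ ε + C * a n)
    (ha : statTendsto a 0) : statTendsto b 0 := fun ε hε => by
  obtain ⟨C, hC⟩ := h (ε / 2) (by positivity)
  refine (ha (ε / (2 * (|C| + 1))) (by positivity)).mono fun n hn => ?_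
  by_contra h
  simp only [Set.mem_ofPred_eq, not_le, sub_zero] at h hn
  rw [lt_div_iff₀ (by positivity)] at h
  have := (le_abs_self (C * a n)).trans_eq (abs_mul C (a n))
  nlinarith [hC n, abs_nonneg (a n)]

end Statistical

section Positive

variable {X Y : Type*} [TopologicalSpace X] [TopologicalSpace Y] {L : C(X, ℝ) →ₗ[ℝ] C(Y, ℝ)}

theorem LinearMap.monotone_of_map_nonneg
    (hpos : ∀ f : C(X, ℝ), (∀ x, 0 ≤ f x) → ∀ y, 0 ≤ L f y) : Monotone L := fun g h hgh y => by
  simpa using hpos (h - g) (fun x => sub_nonneg.2 (hgh x)) y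

theorem LinearMap.abs_apply_le_of_abs_le
    (hpos : ∀ f : C(X, ℝ), (∀ x, 0 ≤ f x) → ∀ y, 0 ≤ L f y) {g h : C(X, ℝ)}
    (hgh : ∀ x, |g x| ≤ h x) (y : Y) : |L g y| ≤ L h y := by
  have hmono := LinearMap.monotone_of_map_nonneg hpos
  refine abs_le.2 ⟨?_, hmono (fun x => (le_abs_self _).trans (hgh x)) y⟩
  simpa using hmono (show -h ≤ g from fun x => (neg_le_neg (hgh x)).trans (neg_abs_le _)) y

end Positive

theorem ContinuousMap.exists_abs_sub_le_add_mul_dist_sq {X : Type*} [PseudoMetricSpace X]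
    [CompactSpace X] (f : C(X, ℝ)) {ε : ℝ} (hε : 0 < ε) :
    ∃ c, 0 ≤ c ∧ ∀ t x, |f t - f x| ≤ ε + c * dist t x ^ 2 := by
  obtain ⟨δ, hδ, hfδ⟩ := Metric.uniformContinuous_iff.mp
    (CompactSpace.uniformContinuous_of_continuous f.continuous) ε hε
  set c := 2 * ‖f‖ / δ ^ 2
  have hc : 0 ≤ c := by positivity
  refine ⟨c, hc, fun t x => ?_⟩
  rcases lt_or_ge (dist t x) δ with hclose | hfar
  · exact (hfδ hclose).le.trans (le_add_of_nonneg_right (by positivity))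
  · have hbound : |f t - f x| ≤ 2 * ‖f‖ := by
      rw [two_mul]
      exact (abs_sub _ _).trans (add_le_add (f.norm_coe_le_norm t) (f.norm_coe_le_norm x))
    calc |f t - f x| ≤ c * δ ^ 2 := by rwa [div_mul_cancel₀ _ (by positivity)]
      _ ≤ c * dist t x ^ 2 := by gcongr
      _ ≤ ε + c * dist t x ^ 2 := le_add_of_nonneg_left hε.le

section Korovkin

variable {s : Set ℝ} [CompactSpace s]

local notation "e₁" => ContinuousMap.mk (fun x : s => (x : ℝ)) continuous_subtype_val
local notation "e₂" => ContinuousMap.mk (fun x : s => (x : ℝ) ^ 2) (continuous_subtype_val.pow 2)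

theorem korovkin_norm_sub_le (L : C(s, ℝ) →ₗ[ℝ] C(s, ℝ))
    (hpos : ∀ f : C(s, ℝ), (∀ x, 0 ≤ f x) → ∀ x, 0 ≤ L f x)
    (h0 : L (ContinuousMap.const _ 1) = ContinuousMap.const _ 1)
    {f : C(s, ℝ)} {ε c : ℝ} (hε : 0 ≤ ε) (hc : 0 ≤ c)
    (hf : ∀ t x, |f t - f x| ≤ ε + c * dist t x ^ 2) :
    ‖L f - f‖ ≤ ε + c * (‖L e₂ - e₂‖ + 2 * ‖e₁‖ * ‖L e₁ - e₁‖) := by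
  refine (ContinuousMap.norm_le _ (by positivity)).2 fun x => ?_
  set q : C(s, ℝ) := (ε + c * x ^ 2) • ContinuousMap.const _ 1 - (2 * c * x) • e₁ + c • e₂
  have hq : ∀ t, q t = ε + c * dist t x ^ 2 := fun t => by
    simp only [q, ContinuousMap.add_apply, ContinuousMap.sub_apply, ContinuousMap.smul_apply,
      ContinuousMap.const_apply, ContinuousMap.coe_mk, smul_eq_mul, Subtype.dist_eq, Real.dist_eq,
      sq_abs]
    ring
  have hLq : L q x = ε + c * ((L e₂ x - x ^ 2) - 2 * x * (L e₁ x - x)) := by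
    simp only [q, map_add, map_sub, map_smul, h0, ContinuousMap.add_apply,
      ContinuousMap.sub_apply, ContinuousMap.smul_apply, ContinuousMap.const_apply, smul_eq_mul]
    ring
  have hLf : L (f - f x • ContinuousMap.const _ 1) x = L f x - f x := by
    rw [map_sub, map_smul, h0]
    simp
  have hfq : |L f x - f x| ≤ L q x :=
    hLf ▸ LinearMap.abs_apply_le_of_abs_le hpos (fun t => by simpa [hq] using hf t x) x
  have he₁ : |L e₁ x - x| ≤ ‖L e₁ - e₁‖ := (L e₁ - e₁).norm_coe_le_norm x
  have he₂ : |L e₂ x - x ^ 2| ≤ ‖L e₂ - e₂‖ := (L e₂ - e₂).norm_coe_le_norm x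
  have hx : |(x : ℝ)| ≤ ‖e₁‖ := ContinuousMap.norm_coe_le_norm e₁ x
  have hmoments :
      (L e₂ x - x ^ 2) - 2 * x * (L e₁ x - x) ≤ ‖L e₂ - e₂‖ + 2 * ‖e₁‖ * ‖L e₁ - e₁‖ := by
    have := neg_abs_le (x * (L e₁ x - x))
    rw [abs_mul] at this
    nlinarith [le_abs_self (L e₂ x - x ^ 2), mul_le_mul hx he₁ (abs_nonneg _) (norm_nonneg _)]
  calc ‖(L f - f) x‖ = |L f x - f x| := rfl
    _ ≤ L q x := hfq
    _ ≤ _ := by rw [hLq]; gcongr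

end Korovkin

theorem statistical_korovkin (ν : ℝ)
    (L : ℕ → C(Set.Icc (0 : ℝ) ν, ℝ) →ₗ[ℝ] C(Set.Icc (0 : ℝ) ν, ℝ))
    (hpos : ∀ n (f : C(Set.Icc (0 : ℝ) ν, ℝ)), (∀ x, 0 ≤ f x) → ∀ x, 0 ≤ L n f x)
    (h0 : ∀ n, L n (ContinuousMap.const _ 1) = ContinuousMap.const _ 1)
    (h1 : statTendsto (fun n =>
      ‖L n ⟨fun x => (x : ℝ), continuous_subtype_val⟩ -
        ⟨fun x => (x : ℝ), continuous_subtype_val⟩‖) 0)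
    (h2 : statTendsto (fun n =>
      ‖L n ⟨fun x => (x : ℝ) ^ 2, by fun_prop⟩ - ⟨fun x => (x : ℝ) ^ 2, by fun_prop⟩‖) 0) :
    ∀ f : C(Set.Icc (0 : ℝ) ν, ℝ), statTendsto (fun n => ‖L n f - f‖) 0 := by
  intro f
  set e₁ : C(Set.Icc (0 : ℝ) ν, ℝ) := ⟨fun x => (x : ℝ), continuous_subtype_val⟩
  have hmoments := h2.add (h1.const_mul (2 * ‖e₁‖))
  rw [mul_zero, add_zero] at hmoments
  refine statTendsto_zero_of_le_add_mul (fun ε hε => ?_) hmoments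
  obtain ⟨c, hc, hf⟩ := f.exists_abs_sub_le_add_mul_dist_sq hε
  refine ⟨c, fun n => ?_⟩
  rw [abs_norm]
  exact korovkin_norm_sub_le (L n) (hpos n) (h0 n) hε.le hc hf
end

section
/- Let f belong to the Lipschitz-type maximal function class V_{α,E} on E ⊆ [0,∞), meaning there is M > 0 and 0 < α ≤ 1 such that |f(t) − f(y)| ≤ M·|t − y|^α for all t ≥ 0 and y ∈ E, and let L be a positive linear operator on bounded continuous functions with L(1)(x) = 1. Then for every x ≥ 0, |L(f)(x) − f(x)| ≤ M·((L((t−x)²)(x))^{α/2} + 2·d(x,E)^α), where d(x,E) = inf{|x−y| : y ∈ E}. -/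
/-!
Write `φ g = L g x`, a positive linear functional with `φ 1 = 1`. For `y ∈ E`, the triangle
inequality through `y` and subadditivity of `u ↦ u ^ α` give
`|φ f - f x| ≤ M (φ |t - x| ^ α + 2 |x - y| ^ α)`, and Jensen's inequality for the concave
function `u ↦ u ^ (α / 2)`, applied to `(t - x) ^ 2`, gives `φ |t - x| ^ α ≤ (φ (t - x) ^ 2) ^ (α / 2)`.
Letting `|x - y|` decrease to `d(x, E)` along points of `E` finishes the proof.
-/

open Set

theorem ContinuousAt.ge_of_forall_gt {F : ℝ → ℝ} {a c : ℝ} (hF : ContinuousAt F a)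
    (h : ∀ r > a, c ≤ F r) : c ≤ F a :=
  ge_of_tendsto (hF.tendsto.mono_left (nhdsWithin_le_nhds (s := Ioi a)))
    (eventually_nhdsWithin_of_forall h)

/-- Concavity of `u ↦ u ^ p` in tangent-line form. -/
theorem Real.rpow_le_rpow_add_mul_sub {u r p : ℝ} (hu : 0 ≤ u) (hr : 0 < r) (hp0 : 0 ≤ p)
    (hp1 : p ≤ 1) : u ^ p ≤ r ^ p + p * r ^ (p - 1) * (u - r) := by
  have hs : -1 ≤ u / r - 1 := by have := div_nonneg hu hr.le; linarith
  have hbern := rpow_one_add_le_one_add_mul_self hs hp0 hp1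
  rw [add_sub_cancel, Real.div_rpow hu hr.le, div_le_iff₀ (Real.rpow_pos_of_pos hr p)] at hbern
  calc u ^ p ≤ (1 + p * (u / r - 1)) * r ^ p := hbern
    _ = r ^ p + p * (r ^ p / r) * (u - r) := by field_simp
    _ = r ^ p + p * r ^ (p - 1) * (u - r) := by rw [Real.rpow_sub_one hr.ne']

def IsPositiveOn {X : Type*} (φ : (X → ℝ) →ₗ[ℝ] ℝ) (S : Set X) : Prop :=
  ∀ g : X → ℝ, (∀ t ∈ S, 0 ≤ g t) → 0 ≤ φ g

namespace IsPositiveOn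

variable {X : Type*} {φ : (X → ℝ) →ₗ[ℝ] ℝ} {S : Set X}

theorem mono (hφ : IsPositiveOn φ S) {g h : X → ℝ} (hgh : ∀ t ∈ S, g t ≤ h t) : φ g ≤ φ h := by
  have := hφ (h - g) fun t ht => sub_nonneg.2 (hgh t ht)
  rwa [map_sub, sub_nonneg] at this

theorem abs_le (hφ : IsPositiveOn φ S) (g : X → ℝ) : |φ g| ≤ φ fun t => |g t| := by
  refine _root_.abs_le.2 ⟨?_, hφ.mono fun t _ => le_abs_self (g t)⟩
  rw [neg_le, ← map_neg]
  exact hφ.mono fun t _ => neg_le.1 (neg_abs_le (g t))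

theorem map_const (h1 : φ 1 = 1) (c : ℝ) : φ (fun _ => c) = c := by
  have : (fun _ => c) = c • (1 : X → ℝ) := by ext; simp
  rw [this, map_smul, h1, smul_eq_mul, mul_one]

/-- Jensen's inequality for the concave function `u ↦ u ^ p`. -/
theorem map_rpow_le (hφ : IsPositiveOn φ S) (h1 : φ 1 = 1) {g : X → ℝ}
    (hg : ∀ t ∈ S, 0 ≤ g t) {p : ℝ} (hp0 : 0 ≤ p) (hp1 : p ≤ 1) :
    φ (fun t => g t ^ p) ≤ φ g ^ p := by
  have hφg : 0 ≤ φ g := hφ g hg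
  refine (Real.continuousAt_rpow_const _ p (Or.inr hp0)).ge_of_forall_gt fun r hr => ?_
  have hr0 : 0 < r := hφg.trans_lt hr
  have htangent : φ (fun t => g t ^ p) ≤ φ fun t => r ^ p + p * r ^ (p - 1) * (g t - r) :=
    hφ.mono fun t ht => Real.rpow_le_rpow_add_mul_sub (hg t ht) hr0 hp0 hp1
  have hlin : (φ fun t => r ^ p + p * r ^ (p - 1) * (g t - r))
      = r ^ p + p * r ^ (p - 1) * (φ g - r) := by
    have : (fun t => r ^ p + p * r ^ (p - 1) * (g t - r))
        = (p * r ^ (p - 1)) • g + (r ^ p - p * r ^ (p - 1) * r) • (1 : X → ℝ) := by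
      funext t; simp only [Pi.add_apply, Pi.smul_apply, smul_eq_mul, Pi.one_apply]; ring
    rw [this, map_add, map_smul, map_smul, h1, smul_eq_mul, smul_eq_mul]; ring
  have : p * r ^ (p - 1) * (φ g - r) ≤ 0 :=
    mul_nonpos_of_nonneg_of_nonpos (by positivity) (by linarith)
  linarith

theorem map_abs_sub_rpow_le {φ : (ℝ → ℝ) →ₗ[ℝ] ℝ} {S : Set ℝ} (hφ : IsPositiveOn φ S)
    (h1 : φ 1 = 1) (x : ℝ) {α : ℝ} (hα0 : 0 ≤ α) (hα2 : α ≤ 2) :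
    φ (fun t => |t - x| ^ α) ≤ φ (fun t => (t - x) ^ 2) ^ (α / 2) := by
  have hsq : ∀ t, |t - x| ^ α = ((t - x) ^ 2) ^ (α / 2) := fun t => by
    rw [← sq_abs, ← Real.rpow_natCast, ← Real.rpow_mul (abs_nonneg _)]
    norm_num [mul_div_cancel₀]
  simp only [hsq]
  exact hφ.map_rpow_le h1 (fun t _ => sq_nonneg _) (by positivity) (by linarith)

theorem abs_map_sub_le_of_holderAt {φ : (ℝ → ℝ) →ₗ[ℝ] ℝ} {S : Set ℝ} (hφ : IsPositiveOn φ S)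
    (h1 : φ 1 = 1) {f : ℝ → ℝ} {M α x y : ℝ} (hM : 0 ≤ M) (hα0 : 0 ≤ α) (hα1 : α ≤ 1)
    (hy : ∀ t ∈ S, |f t - f y| ≤ M * |t - y| ^ α) (hx : x ∈ S) :
    |φ f - f x| ≤ M * (φ (fun t => |t - x| ^ α) + 2 * |x - y| ^ α) := by
  have htriangle : ∀ t ∈ S, |f t - f y| ≤ M * (|t - x| ^ α + |x - y| ^ α) := fun t ht =>
    calc |f t - f y| ≤ M * |t - y| ^ α := hy t ht
      _ ≤ M * (|t - x| + |x - y|) ^ α := by gcongr; exact abs_sub_le t x y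
      _ ≤ M * (|t - x| ^ α + |x - y| ^ α) := by
        gcongr; exact Real.rpow_add_le_add_rpow (abs_nonneg _) (abs_nonneg _) hα0 hα1
  have hshift : φ (fun t => f t - f y) = φ f - f y := by
    rw [show (fun t => f t - f y) = f - fun _ => f y from rfl, map_sub, map_const h1]
  have hbound : φ (fun t => M * (|t - x| ^ α + |x - y| ^ α))
      = M * φ (fun t => |t - x| ^ α) + M * |x - y| ^ α := by
    rw [show (fun t => M * (|t - x| ^ α + |x - y| ^ α))
        = M • (fun t => |t - x| ^ α) + fun _ => M * |x - y| ^ α by ext; simp [mul_add],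
      map_add, map_smul, map_const h1, smul_eq_mul]
  calc |φ f - f x| ≤ |φ f - f y| + |f y - f x| := abs_sub_le _ _ _
    _ ≤ φ (fun t => |f t - f y|) + M * |x - y| ^ α := by
      rw [← hshift, abs_sub_comm (f y)]
      exact add_le_add (hφ.abs_le _) (hy x hx)
    _ ≤ φ (fun t => M * (|t - x| ^ α + |x - y| ^ α)) + M * |x - y| ^ α := by
      gcongr; exact hφ.mono htriangle
    _ = M * (φ (fun t => |t - x| ^ α) + 2 * |x - y| ^ α) := by rw [hbound]; ring

end IsPositiveOn

theorem lipschitz_maximal_rate_general (E : Set ℝ) (hEne : E.Nonempty)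
    (f : ℝ → ℝ) (M α : ℝ) (hM : 0 < M) (hα0 : 0 < α) (hα1 : α ≤ 1)
    (hf : ∀ t ≥ (0 : ℝ), ∀ y ∈ E, |f t - f y| ≤ M * |t - y| ^ α)
    (L : (ℝ → ℝ) →ₗ[ℝ] (ℝ → ℝ))
    (hpos : ∀ g : ℝ → ℝ, (∀ t ≥ (0 : ℝ), 0 ≤ g t) → ∀ y ≥ (0 : ℝ), 0 ≤ L g y)
    (x : ℝ) (hx : 0 ≤ x) (h1 : L (fun _ => 1) x = 1) :
    |L f x - f x| ≤
      M * ((L (fun t => (t - x) ^ 2) x) ^ (α / 2) + 2 * Metric.infDist x E ^ α) := by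
  set φ := (LinearMap.proj x).comp L
  have hφ : IsPositiveOn φ (Ici 0) := fun g hg => hpos g hg x hx
  have hmoment := hφ.map_abs_sub_rpow_le h1 x hα0.le (by linarith)
  have hcont : ContinuousAt (fun r => M * (φ (fun t => (t - x) ^ 2) ^ (α / 2) + 2 * r ^ α))
      (Metric.infDist x E) :=
    (((Real.continuousAt_rpow_const _ α (Or.inr hα0.le)).const_mul 2).const_add _).const_mul M
  refine hcont.ge_of_forall_gt fun r hr => ?_
  obtain ⟨y, hyE, hxy⟩ := (Metric.infDist_lt_iff hEne).1 hr
  rw [Real.dist_eq] at hxy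
  calc |L f x - f x| ≤ M * (φ (fun t => |t - x| ^ α) + 2 * |x - y| ^ α) :=
        hφ.abs_map_sub_le_of_holderAt h1 hM.le hα0.le hα1 (fun t ht => hf t ht y hyE) hx
    _ ≤ M * (φ (fun t => (t - x) ^ 2) ^ (α / 2) + 2 * r ^ α) := by
      gcongr

theorem lipschitz_maximal_rate (E : Set ℝ) (hE : E ⊆ Set.Ici 0) (hEne : E.Nonempty)
    (f : ℝ → ℝ) (M α : ℝ) (hM : 0 < M) (hα0 : 0 < α) (hα1 : α ≤ 1)
    (hf : ∀ t ≥ (0 : ℝ), ∀ y ∈ E, |f t - f y| ≤ M * |t - y| ^ α)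
    (L : (ℝ → ℝ) →ₗ[ℝ] (ℝ → ℝ))
    (hpos : ∀ g : ℝ → ℝ, (∀ t ≥ (0 : ℝ), 0 ≤ g t) → ∀ y ≥ (0 : ℝ), 0 ≤ L g y)
    (x : ℝ) (hx : 0 ≤ x) (h1 : L (fun _ => 1) x = 1) :
    |L f x - f x| ≤
      M * ((L (fun t => (t - x) ^ 2) x) ^ (α / 2) + 2 * Metric.infDist x E ^ α) :=
  lipschitz_maximal_rate_general E hEne f M α hM hα0 hα1 hf L hpos x hx h1
end
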